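/- Let C ⊆ F_q^n be a k-dimensional F_q-linear code (1 ≤ k < n) and let f_1,…,f_{q^k} : C → F_p be functions with f_1 ≡ 0 and f_i(0) = 0 for all i, such that H = [ω^{f_i(c)}] is a BH(q^k,p) matrix (i.e., Σ_{c∈C} ω^{f_i(c) − f_j(c)} = 0 whenever i ≠ j). Let m ≥ 2 and Q = span_ℂ{φ_{f_i}^{⊗m} : 1 ≤ i ≤ q^k} ⊆ ((F_q^n)^m → ℂ). Define stab(Q) = {(μ,a,b) ∈ ℂ × F_q^{nm} × F_q^{nm} : μ·X(a)Z(b)v = v for all v ∈ Q}, and suppose Q is a stabilizer code, i.e., every w : (F_q^n)^m → ℂ satisfying μ·X(a)Z(b)w = w for all (μ,a,b) ∈ stab(Q) belongs to Q. Then every f_i is F_p-linear; consequently there exist a bijection σ : {1,…,q^k} → F_p^{rk} and an F_p-linear isomorphism τ : C → F_p^{rk} such that f_i(c) = σ(i)·τ(c) for all i and all c ∈ C, i.e., H is equivalent to the rk-fold Kronecker product of the Fourier matrix of order p. -/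

import Mathlib

open Matrix

attribute [local instance] Classical.propDecidable

/-- `ω^a` where `ω = exp(2πi/p)` and `a : ZMod p`. -/
noncomputable def omg (p : ℕ) (a : ZMod p) : ℂ :=
  Complex.exp (2 * Real.pi * Complex.I * (a.val : ℂ) / (p : ℂ))

/-!
The state `φ_0^{⊗m}` is a nonzero multiple of the indicator of `C^m`, and a Weyl operator fixing it
has trivial phase on `C^m`. Hence every Weyl operator stabilising `Q` commutes with translations by
`C^m`, and since `Q` is a stabilizer code, the translates `φ_{f_j}^{⊗m}(· + (a, 0, …, 0))` lie in
`Q`. Writing such a translate as `∑ c_i φ_{f_i}^{⊗m}` and evaluating at `(u, w, 0, …)`, the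
orthogonality of the rows of `H` in the variable `w` isolates `c_j ω^{f_j(u)} = ω^{f_j(u + a)}`,
so `f_j` is additive, hence `F_p`-linear. The `q^k` rows are distinct linear functionals on
`C ≅ F_p^{rk}`, so they exhaust its dual, which is the Kronecker power of the Fourier matrix.
-/

theorem omg_ne_zero (p : ℕ) (a : ZMod p) : omg p a ≠ 0 := Complex.exp_ne_zero _

section Omega

variable {p : ℕ} [NeZero p]

theorem omg_eq_stdAddChar : omg p = ZMod.stdAddChar := by
  funext a
  rw [ZMod.stdAddChar_apply, ZMod.toCircle_apply, omg]

@[simp]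
theorem omg_zero : omg p 0 = 1 := by
  rw [omg_eq_stdAddChar, AddChar.map_zero_eq_one]

theorem omg_add (a b : ZMod p) : omg p (a + b) = omg p a * omg p b := by
  rw [omg_eq_stdAddChar, AddChar.map_add_eq_mul]

theorem omg_sub (a b : ZMod p) : omg p (a - b) = omg p a / omg p b := by
  rw [omg_eq_stdAddChar, AddChar.map_sub_eq_div]

theorem omg_injective : Function.Injective (omg p) := by
  rw [omg_eq_stdAddChar]
  exact ZMod.injective_stdAddChar

theorem omg_sum {α : Type*} (s : Finset α) (g : α → ZMod p) :
    omg p (∑ i ∈ s, g i) = ∏ i ∈ s, omg p (g i) := by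
  induction s using Finset.cons_induction with
  | empty => simp
  | cons a s ha ih => rw [Finset.sum_cons, Finset.prod_cons, omg_add, ih]

variable {ι α : Type*} [Fintype α] [Nonempty α] {g : ι → α → ZMod p}

theorem injective_of_sum_omg_sub_eq_zero
    (hg : ∀ i j, i ≠ j → ∑ w, omg p (g i w - g j w) = 0) : Function.Injective g := by
  intro i j hij
  by_contra hne
  simpa [hij] using hg i j hne

theorem coeff_eq_of_sum_mul_omg_eq [Fintype ι]
    (hg : ∀ i j, i ≠ j → ∑ w, omg p (g i w - g j w) = 0) {d : ι → ℂ} {t : ℂ} {j : ι}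
    (h : ∀ w, ∑ i, d i * omg p (g i w) = t * omg p (g j w)) : d j = t := by
  have hα : (Fintype.card α : ℂ) ≠ 0 := Nat.cast_ne_zero.mpr Fintype.card_ne_zero
  apply mul_right_cancel₀ hα
  calc d j * Fintype.card α = ∑ i, d i * ∑ w, omg p (g i w - g j w) := by
        rw [Fintype.sum_eq_single j fun i hi => by rw [hg i j hi, mul_zero]]
        simp
    _ = ∑ w, (∑ i, d i * omg p (g i w)) / omg p (g j w) := by
        simp only [Finset.mul_sum, Finset.sum_div, omg_sub, mul_div_assoc]
        exact Finset.sum_comm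
    _ = t * Fintype.card α := by simp [h, omg_ne_zero, mul_comm]

end Omega

section TensorPower

variable (p : ℕ) {F : Type*} [Field F] {ι κ : Type*} [Fintype ι] (C : Submodule F (κ → F))

/-- `φ_g^{⊗ι}`, with normalising constant `s` in place of `1/√(q^k)`. -/
noncomputable def tensorPowerState (s : ℂ) (g : C → ZMod p) (x : ι → κ → F) : ℂ :=
  ∏ i, if hx : x i ∈ C then s * omg p (g ⟨x i, hx⟩) else 0

variable {p C}

theorem tensorPowerState_eq_zero_of_notMem {s : ℂ} {g : C → ZMod p} {x : ι → κ → F} {i : ι}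
    (hx : x i ∉ C) : tensorPowerState p C s g x = 0 :=
  Finset.prod_eq_zero (Finset.mem_univ i) (dif_neg hx)

variable [NeZero p]

theorem tensorPowerState_apply_coe (s : ℂ) (g : C → ZMod p) (y : ι → C) :
    tensorPowerState p C s g (fun i => y i) = s ^ Fintype.card ι * omg p (∑ i, g (y i)) := by
  simp [tensorPowerState, Finset.prod_mul_distrib, omg_sum]

theorem tensorPowerState_zero_of_forall_mem (s : ℂ) {x : ι → κ → F} (hx : ∀ i, x i ∈ C) :
    tensorPowerState p C s 0 x = s ^ Fintype.card ι := by
  simpa using tensorPowerState_apply_coe (p := p) (C := C) s 0 fun i => ⟨x i, hx i⟩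

theorem tensorPowerState_single_add_single (s : ℂ) {g : C → ZMod p} (hg : g 0 = 0)
    {i₀ i₁ : ι} (hi : i₀ ≠ i₁) (u w : C) :
    tensorPowerState p C s g (fun i => ((Pi.single i₀ u + Pi.single i₁ w : ι → C) i : κ → F))
      = s ^ Fintype.card ι * omg p (g u + g w) := by
  rw [tensorPowerState_apply_coe, Fintype.sum_eq_add i₀ i₁ hi fun i hi' => by
    simp [hi'.1, hi'.2, hg]]
  simp [hi, hi.symm]

end TensorPower

section Weyl

variable (p : ℕ) {F : Type*} [Field F] [Algebra (ZMod p) F] {ι κ : Type*} [Fintype ι] [Fintype κ]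

/-- The multiplier `x ↦ ω^{Tr(b·x)}` of `Z(b)`. -/
noncomputable def zPhase (b x : ι → κ → F) : ℂ :=
  omg p (Algebra.trace (ZMod p) F (∑ i, b i ⬝ᵥ x i))

/-- The operator `μ X(a) Z(b)`. -/
noncomputable def weylOp (μ : ℂ) (a b : ι → κ → F) (u : (ι → κ → F) → ℂ) :
    (ι → κ → F) → ℂ :=
  fun x => μ * (zPhase p b (x - a) * u (x - a))

def IsStabilizerCode (Q : Submodule ℂ ((ι → κ → F) → ℂ)) : Prop :=
  ∀ v, (∀ μ a b, (∀ u ∈ Q, weylOp p μ a b u = u) → weylOp p μ a b v = v) → v ∈ Q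

variable {p} [NeZero p]

@[simp]
theorem zPhase_zero (b : ι → κ → F) : zPhase p b 0 = 1 := by
  simp [zPhase]

theorem zPhase_add (b x y : ι → κ → F) :
    zPhase p b (x + y) = zPhase p b x * zPhase p b y := by
  simp only [zPhase, Pi.add_apply, dotProduct_add, Finset.sum_add_distrib, map_add, omg_add]

theorem weylOp_apply_add (μ : ℂ) (a b : ι → κ → F) (u : (ι → κ → F) → ℂ) (x e : ι → κ → F) :
    weylOp p μ a b u (x + e) = zPhase p b e * weylOp p μ a b (fun y => u (y + e)) x := by
  simp only [weylOp, add_sub_right_comm x e a, zPhase_add]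
  ring

variable {C : Submodule F (κ → F)} {s : ℂ}

/-- Evaluating the fixed point equation at `0`, `a` and `a + e` shows in turn `μ ≠ 0`, `a ∈ C^ι`,
`μ = 1` and `ω^{Tr(b·e)} = 1`. -/
theorem zPhase_eq_one_of_weylOp_fixes (hs : s ≠ 0) {μ : ℂ} {a b : ι → κ → F}
    (hfix : weylOp p μ a b (tensorPowerState p C s 0) = tensorPowerState p C s 0)
    {e : ι → κ → F} (he : ∀ i, e i ∈ C) : zPhase p b e = 1 := by
  have hK : s ^ Fintype.card ι ≠ 0 := pow_ne_zero _ hs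
  have h0 : tensorPowerState p C s 0 0 = s ^ Fintype.card ι :=
    tensorPowerState_zero_of_forall_mem s fun _ => C.zero_mem
  have hμ : μ ≠ 0 := by
    rintro rfl
    have h := congrFun hfix 0
    simp only [weylOp, zero_mul, h0] at h
    exact hK h.symm
  have ha : ∀ i, a i ∈ C := by
    by_contra! ⟨i, hi⟩
    have h := congrFun hfix a
    simp [weylOp, tensorPowerState_eq_zero_of_notMem hi, h0, hs] at h
    exact hμ h
  have hμ1 : μ = 1 := by
    have h := congrFun hfix a
    simp only [weylOp, sub_self, zPhase_zero, one_mul, h0,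
      tensorPowerState_zero_of_forall_mem s ha] at h
    exact (mul_eq_right₀ hK).mp h
  have h := congrFun hfix (a + e)
  simp only [weylOp, add_sub_cancel_left, hμ1, one_mul, tensorPowerState_zero_of_forall_mem s he,
    tensorPowerState_zero_of_forall_mem (x := a + e) s fun i => C.add_mem (ha i) (he i)] at h
  exact (mul_eq_right₀ hK).mp h

theorem IsStabilizerCode.translate_mem {Q : Submodule ℂ ((ι → κ → F) → ℂ)}
    (hQ : IsStabilizerCode p Q) (hs : s ≠ 0) (hT : tensorPowerState p C s 0 ∈ Q)
    {u : (ι → κ → F) → ℂ} (hu : u ∈ Q) {e : ι → κ → F} (he : ∀ i, e i ∈ C) :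
    (fun x => u (x + e)) ∈ Q := by
  refine hQ _ fun μ a b hfix => funext fun x => ?_
  have h := weylOp_apply_add (p := p) μ a b u x e
  rwa [zPhase_eq_one_of_weylOp_fixes hs (hfix _ hT) he, one_mul, hfix u hu, eq_comm] at h

end Weyl

section Additivity

variable {p : ℕ} [NeZero p] {F : Type*} [Field F] {ι κ η : Type*} [Fintype ι] [Fintype η]
  {C : Submodule F (κ → F)} [Fintype C] {s : ℂ} {i₀ i₁ : ι}

/-- Testing on the points `(u, w, 0, …)`, the orthogonality of the rows in `w` isolates
`c j * ω^{f j u} = ω^{f j (u + a)}` for the coefficients `c` of the translate; `u = 0` gives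
`c j = ω^{f j a}`. -/
theorem map_add_of_translate_mem_span (hs : s ≠ 0) {f : η → C → ZMod p}
    (hH : ∀ i j, i ≠ j → ∑ c, omg p (f i c - f j c) = 0) (hf0 : ∀ i, f i 0 = 0)
    (hi : i₀ ≠ i₁) {j : η} {a : C}
    (hmem : (fun x => tensorPowerState p C s (f j)
        (x + fun i => ((Pi.single i₀ a : ι → C) i : κ → F)))
      ∈ Submodule.span ℂ (Set.range fun i => tensorPowerState p C s (f i)))
    (u : C) : f j (u + a) = f j u + f j a := by
  obtain ⟨c, hc⟩ := (Submodule.mem_span_range_iff_exists_fun ℂ).mp hmem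
  have hK : s ^ Fintype.card ι ≠ 0 := pow_ne_zero _ hs
  have hcoeff : ∀ u, c j * omg p (f j u) = omg p (f j (u + a)) := by
    intro u
    have h := coeff_eq_of_sum_mul_omg_eq hH (j := j)
      (d := fun i => c i * s ^ Fintype.card ι * omg p (f i u))
      (t := s ^ Fintype.card ι * omg p (f j (u + a))) fun w => by
        have h := congrFun hc (fun i => ((Pi.single i₀ u + Pi.single i₁ w : ι → C) i : κ → F))
        have hshift : (fun i => ((Pi.single i₀ u + Pi.single i₁ w : ι → C) i : κ → F))
            + (fun i => ((Pi.single i₀ a : ι → C) i : κ → F))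
            = fun i => ((Pi.single i₀ (u + a) + Pi.single i₁ w : ι → C) i : κ → F) := by
          rw [Pi.single_add, add_right_comm]
          rfl
        simp only [hshift, Finset.sum_apply, Pi.smul_apply, smul_eq_mul,
          tensorPowerState_single_add_single s (hf0 _) hi, omg_add] at h
        simpa only [mul_assoc] using h
    exact mul_left_cancel₀ hK (by linear_combination h)
  have hc0 : c j = omg p (f j a) := by simpa [hf0] using hcoeff 0
  apply omg_injective
  rw [← hcoeff u, hc0, omg_add, mul_comm]

end Additivity

theorem isLinearMap_zmod_of_map_add {n : ℕ} {M : Type*} [AddCommGroup M] [Module (ZMod n) M]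
    {g : M → ZMod n} (h : ∀ x y, g (x + y) = g x + g y) : IsLinearMap (ZMod n) g :=
  ((AddMonoidHom.mk' g h).toZModLinearMap n).isLinear

theorem exists_equiv_forall_eq_dotProduct {K V η : Type*} [Field K] [Fintype K]
    [AddCommGroup V] [Module K V] [Fintype V] [Fintype η] {d : ℕ}
    (hV : Fintype.card V = Fintype.card K ^ d) (hη : Fintype.card η = Fintype.card K ^ d)
    {f : η → V → K} (hf : ∀ i, IsLinearMap K (f i)) (hinj : Function.Injective f) :
    ∃ (σ : η ≃ (Fin d → K)) (τ : V ≃ₗ[K] (Fin d → K)), ∀ i c, f i c = σ i ⬝ᵥ τ c := by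
  have hrank : Module.finrank K V = Module.finrank K (Fin d → K) := by
    rw [Module.finrank_fin_fun]
    exact Nat.pow_right_injective Fintype.one_lt_card (Module.card_eq_pow_finrank.symm.trans hV)
  let τ := LinearEquiv.ofFinrankEq V (Fin d → K) hrank
  let σ : η → Fin d → K := fun i t => f i (τ.symm (Pi.single t 1))
  have hσ : ∀ i c, f i c = σ i ⬝ᵥ τ c := by
    intro i c
    have h := LinearMap.pi_apply_eq_sum_univ ((hf i).mk' (f i) ∘ₗ τ.symm.toLinearMap) (τ c)
    have hsingle : ∀ t : Fin d, (fun j => if t = j then (1 : K) else 0) = Pi.single t 1 :=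
      fun t => funext fun j => by simp [Pi.single_apply, eq_comm]
    simpa [dotProduct, mul_comm, σ, hsingle] using h
  refine ⟨Equiv.ofBijective σ ?_, τ, hσ⟩
  rw [Fintype.bijective_iff_injective_and_card]
  exact ⟨fun i j h => hinj (funext fun c => by rw [hσ, hσ, h]), by simp [hη]⟩

theorem stmt_15_general (p r n k m : ℕ) [Fact p.Prime]
    (hm : 2 ≤ m)
    (F : Type) [Field F] [Fintype F] [Algebra (ZMod p) F] (hF : Fintype.card F = p ^ r)
    (C : Submodule F (Fin n → F)) (hC : Module.finrank F C = k)
    (f : Fin ((p ^ r) ^ k) → ↥C → ZMod p)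
    (i0 : Fin ((p ^ r) ^ k)) (hi0 : ∀ c : ↥C, f i0 c = 0)
    (hf00 : ∀ i, f i 0 = 0)
    (hBH : ∀ i j, i ≠ j → ∑ c : ↥C, omg p (f i c - f j c) = 0)
    (Φ : Fin ((p ^ r) ^ k) → (Fin m → Fin n → F) → ℂ)
    (hΦ : ∀ i x, Φ i x = ∏ j : Fin m,
      (if hx : x j ∈ C then (Real.sqrt ((p ^ r) ^ k))⁻¹ * omg p (f i ⟨x j, hx⟩) else 0))
    (hstab : ∀ v : (Fin m → Fin n → F) → ℂ,
      (∀ (μ : ℂ) (a b : Fin m → Fin n → F),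
        (∀ u ∈ Submodule.span ℂ (Set.range Φ), ∀ x : Fin m → Fin n → F,
          μ * (omg p (Algebra.trace (ZMod p) F (∑ i : Fin m, b i ⬝ᵥ (x i - a i)))
            * u (fun i => x i - a i)) = u x) →
        (∀ x : Fin m → Fin n → F,
          μ * (omg p (Algebra.trace (ZMod p) F (∑ i : Fin m, b i ⬝ᵥ (x i - a i)))
            * v (fun i => x i - a i)) = v x)) →
      v ∈ Submodule.span ℂ (Set.range Φ)) :
    (∀ i, IsLinearMap (ZMod p) (f i))
    ∧ ∃ (σ : Fin ((p ^ r) ^ k) ≃ (Fin (r * k) → ZMod p))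
        (τ : ↥C ≃ₗ[ZMod p] (Fin (r * k) → ZMod p)),
        ∀ (i : Fin ((p ^ r) ^ k)) (c : ↥C), f i c = σ i ⬝ᵥ τ c := by
  set s : ℂ := (((Real.sqrt ((p ^ r) ^ k))⁻¹ : ℝ) : ℂ)
  have hp : (0 : ℝ) < p := mod_cast (Fact.out : p.Prime).pos
  have hs : s ≠ 0 := by simpa [s] using (Real.sqrt_pos.mpr (pow_pos (pow_pos hp r) k)).ne'
  obtain rfl : Φ = fun i => tensorPowerState p C s (f i) := funext fun i => funext (hΦ i)
  set Q := Submodule.span ℂ (Set.range fun i => tensorPowerState (ι := Fin m) p C s (f i))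
  have hQ : IsStabilizerCode p Q := fun v hv =>
    hstab v fun μ a b hfix => congrFun (hv μ a b fun u hu => funext (hfix u hu))
  have hT : tensorPowerState p C s 0 ∈ Q := by
    rw [show (0 : C → ZMod p) = f i0 from (funext hi0).symm]
    exact Submodule.subset_span ⟨i0, rfl⟩
  obtain ⟨i₀, i₁, hi⟩ := (Fin.nontrivial_iff_two_le.mpr hm).exists_pair_ne
  have hlin : ∀ i, IsLinearMap (ZMod p) (f i) := fun i => isLinearMap_zmod_of_map_add fun u a =>
    map_add_of_translate_mem_span hs hBH hf00 hi (hQ.translate_mem hs hT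
      (Submodule.subset_span ⟨i, rfl⟩) fun _ => SetLike.coe_mem _) u
  refine ⟨hlin, exists_equiv_forall_eq_dotProduct ?_ ?_ hlin (injective_of_sum_omg_sub_eq_zero hBH)⟩
  · rw [ZMod.card, pow_mul, ← hF, ← hC]
    exact Module.card_eq_pow_finrank
  · simp [pow_mul]

/-- if `H = [ω^{f_i(c)}]` is a normalized `BH(q^k,p)` matrix and
`Q = span{φ_{f_i}^{⊗m}}` is a stabilizer code (i.e. it equals the joint fixed space of
its stabilizer group `stab(Q)`), then every `f_i` is `F_p`-linear; consequently
`f_i(c) = σ(i)·τ(c)` for a bijection `σ` onto `F_p^{rk}` and an `F_p`-linear isomorphism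
`τ : C ≃ F_p^{rk}`, i.e. `H` is equivalent to the `rk`-fold Kronecker product of the
Fourier matrix of order `p`. -/
theorem stmt_15 (p r n k m : ℕ) [Fact p.Prime] (hr : 0 < r) (hk1 : 1 ≤ k) (hkn : k < n)
    (hm : 2 ≤ m)
    (F : Type) [Field F] [Fintype F] [Algebra (ZMod p) F] (hF : Fintype.card F = p ^ r)
    (C : Submodule F (Fin n → F)) (hC : Module.finrank F C = k)
    (f : Fin ((p ^ r) ^ k) → ↥C → ZMod p)
    (i0 : Fin ((p ^ r) ^ k)) (hi0 : ∀ c : ↥C, f i0 c = 0)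
    (hf00 : ∀ i, f i 0 = 0)
    (hBH : ∀ i j, i ≠ j → ∑ c : ↥C, omg p (f i c - f j c) = 0)
    (Φ : Fin ((p ^ r) ^ k) → (Fin m → Fin n → F) → ℂ)
    (hΦ : ∀ i x, Φ i x = ∏ j : Fin m,
      (if hx : x j ∈ C then (Real.sqrt ((p ^ r) ^ k))⁻¹ * omg p (f i ⟨x j, hx⟩) else 0))
    (hstab : ∀ v : (Fin m → Fin n → F) → ℂ,
      (∀ (μ : ℂ) (a b : Fin m → Fin n → F),
        (∀ u ∈ Submodule.span ℂ (Set.range Φ), ∀ x : Fin m → Fin n → F,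
          μ * (omg p (Algebra.trace (ZMod p) F (∑ i : Fin m, b i ⬝ᵥ (x i - a i)))
            * u (fun i => x i - a i)) = u x) →
        (∀ x : Fin m → Fin n → F,
          μ * (omg p (Algebra.trace (ZMod p) F (∑ i : Fin m, b i ⬝ᵥ (x i - a i)))
            * v (fun i => x i - a i)) = v x)) →
      v ∈ Submodule.span ℂ (Set.range Φ)) :
    (∀ i, IsLinearMap (ZMod p) (f i))
    ∧ ∃ (σ : Fin ((p ^ r) ^ k) ≃ (Fin (r * k) → ZMod p))
        (τ : ↥C ≃ₗ[ZMod p] (Fin (r * k) → ZMod p)),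
        ∀ (i : Fin ((p ^ r) ^ k)) (c : ↥C), f i c = σ i ⬝ᵥ τ c :=
  stmt_15_general p r n k m hm F hF C hC f i0 hi0 hf00 hBH Φ hΦ hstab
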